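/- arXiv:0810.0725 — 3 statements merged into one kernel-verified Lean document; each statement's English description precedes it below -/
import Mathlib

section
/- The composition G_-∘G_+ is a square-zero operator: (G_-∘G_+)² = 0. -/
/-- the composition `G₋∘G₊` is a square-zero operator:
`(G₋∘G₊) ∘ (G₋∘G₊) = 0`.  Setting: axioms A1, A2 and the definition of `G₊`. -/
theorem GminusGplus_squared_eq_zero
    {H : Type*} [AddCommGroup H] [Module ℂ H]
    (Q Gm Gp : H →ₗ[ℂ] H)
    (H0 : Submodule ℂ H) {ι : Type*} (e : ι → H)
    (hQ2 : Q ∘ₗ Q = 0) (hGm2 : Gm ∘ₗ Gm = 0) (hQGm : Q ∘ₗ Gm + Gm ∘ₗ Q = 0)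
    (hQ0 : ∀ x ∈ H0, Q x = 0) (hGm0 : ∀ x ∈ H0, Gm x = 0)
    (hindep : ∀ α : ι, LinearIndependent ℂ ![e α, Q (e α), Gm (e α), Q (Gm (e α))])
    (hdirect : iSupIndep (fun o : Option ι => o.elim H0 fun α =>
      Submodule.span ℂ {e α, Q (e α), Gm (e α), Q (Gm (e α))}))
    (hspan : H0 ⊔ (⨆ α : ι, Submodule.span ℂ {e α, Q (e α), Gm (e α), Q (Gm (e α))}) = ⊤)
    (hGp0 : ∀ x ∈ H0, Gp x = 0)
    (hGpe : ∀ α : ι, Gp (e α) = 0)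
    (hGpGme : ∀ α : ι, Gp (Gm (e α)) = 0)
    (hGpQe : ∀ α : ι, Gp (Q (e α)) = e α)
    (hGpQGme : ∀ α : ι, Gp (Q (Gm (e α))) = Gm (e α)) :
    (Gm ∘ₗ Gp) ∘ₗ (Gm ∘ₗ Gp) = 0 := by
  have hGm2' : ∀ x, Gm (Gm x) = 0 := fun x => congrFun (congrArg DFunLike.coe hGm2) x
  ext x
  have hx : x ∈ (⊤ : Submodule ℂ H) := trivial
  rw [← hspan] at hx
  simp only [LinearMap.zero_apply, LinearMap.comp_apply]
  obtain ⟨y, hy, z, hz, rfl⟩ := Submodule.mem_sup.mp hx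
  clear hx
  have hz0 : Gm (Gp (Gm (Gp z))) = 0 := by
    induction hz using Submodule.iSup_induction' with
    | mem α w hw =>
      induction hw using Submodule.span_induction with
      | mem v hv =>
        rcases hv with h | h | h | h
        · rw [h, hGpe α]; simp
        · rw [h, hGpQe α, hGpGme α]; simp
        · rw [h, hGpGme α]; simp
        · rw [h, hGpQGme α, hGm2']; simp
      | zero => simp
      | add a b _ _ ha hb => simp only [map_add, ha, hb, add_zero]
      | smul c a _ ha => simp only [map_smul, ha, smul_zero]
    | zero => simp
    | add a b _ _ ha hb => simp only [map_add, ha, hb, add_zero]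
  simp [map_add, hGp0 y hy, hz0]
end

section
/- For all homogeneous a, b, c, d ∈ H the following four-point identity (the graph form of the 7-term relation on the moduli space of genus-zero curves with four marked points) holds: ∫G_-(a)bcd + (−1)^{|a|}∫aG_-(b)cd + (−1)^{|a|+|b|}∫abG_-(c)d + (−1)^{|a|+|b|+|c|}∫abcG_-(d) = ∫G_-(ab)cd + (−1)^{|b|(|a|+1)}∫bG_-(ac)d + (−1)^{|a|}∫aG_-(bc)d. -/
/-- the four-point identity (graph form of the 7-term relation on
`M̄₀,₄`): for all homogeneous `a, b, c, d`,
`∫G₋(a)bcd + (−1)^{|a|}∫aG₋(b)cd + (−1)^{|a|+|b|}∫abG₋(c)d + (−1)^{|a|+|b|+|c|}∫abcG₋(d)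
 = ∫G₋(ab)cd + (−1)^{|b|(|a|+1)}∫bG₋(ac)d + (−1)^{|a|}∫aG₋(bc)d`.
Setting: `H` is a ℤ₂-graded supercommutative associative unital ℂ-algebra, `G₋` is an
odd operator satisfying the 7-term relation (axiom A4), and the even linear functional
`I = ∫` satisfies `∫ G₋(a)·b = (−1)^{|a|} ∫ a·G₋(b)` (part of axiom A6). -/
theorem four_point_seven_term_identity
    {H : Type*} [Ring H] [Algebra ℂ H]
    (Hhom : ZMod 2 → Submodule ℂ H)
    (hinternal : DirectSum.IsInternal Hhom)
    (hone : (1 : H) ∈ Hhom 0)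
    (hmul : ∀ (p q : ZMod 2) (a b : H), a ∈ Hhom p → b ∈ Hhom q → a * b ∈ Hhom (p + q))
    (hsupercomm : ∀ (p q : ZMod 2) (a b : H), a ∈ Hhom p → b ∈ Hhom q →
      a * b = ((-1 : ℂ) ^ (p.val * q.val)) • (b * a))
    (Gm : H →ₗ[ℂ] H)
    (hGmodd : ∀ (p : ZMod 2) (a : H), a ∈ Hhom p → Gm a ∈ Hhom (p + 1))
    (hseven : ∀ (pa pb : ZMod 2) (a b c : H), a ∈ Hhom pa → b ∈ Hhom pb →
      Gm (a * b * c) =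
        Gm (a * b) * c + ((-1 : ℂ) ^ (pb.val * (pa.val + 1))) • (b * Gm (a * c)) +
          ((-1 : ℂ) ^ pa.val) • (a * Gm (b * c)) -
        Gm a * b * c - ((-1 : ℂ) ^ pa.val) • (a * Gm b * c) -
          ((-1 : ℂ) ^ (pa.val + pb.val)) • (a * b * Gm c))
    (I : H →ₗ[ℂ] ℂ)
    (hIeven : ∀ a ∈ Hhom 1, I a = 0)
    (hIGm : ∀ (p : ZMod 2) (a : H), a ∈ Hhom p → ∀ b : H,
      I (Gm a * b) = ((-1 : ℂ) ^ p.val) * I (a * Gm b)) :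
    ∀ (pa pb pc pd : ZMod 2) (a b c d : H),
      a ∈ Hhom pa → b ∈ Hhom pb → c ∈ Hhom pc → d ∈ Hhom pd →
      I (Gm a * b * c * d) + ((-1 : ℂ) ^ pa.val) * I (a * Gm b * c * d) +
        ((-1 : ℂ) ^ (pa.val + pb.val)) * I (a * b * Gm c * d) +
        ((-1 : ℂ) ^ (pa.val + pb.val + pc.val)) * I (a * b * c * Gm d) =
      I (Gm (a * b) * c * d) +
        ((-1 : ℂ) ^ (pb.val * (pa.val + 1))) * I (b * Gm (a * c) * d) +
        ((-1 : ℂ) ^ pa.val) * I (a * Gm (b * c) * d) := by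
  intro pa pb pc pd a b c d ha hb hc hd
  have hsign : ∀ p q : ZMod 2, ((-1 : ℂ)) ^ (p + q).val = (-1 : ℂ) ^ (p.val + q.val) := by
    intro p q
    rw [ZMod.val_add, ← neg_one_pow_eq_pow_mod_two]
  have habc : a * b * c ∈ Hhom (pa + pb + pc) := hmul _ _ _ _ (hmul _ _ _ _ ha hb) hc
  have e1 : I (Gm (a * b * c) * d)
      = (-1 : ℂ) ^ (pa.val + pb.val + pc.val) * I (a * b * c * Gm d) := by
    rw [hIGm _ _ habc d, hsign, pow_add, hsign, ← pow_add]
  have h7 := hseven pa pb a b c ha hb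
  have e2 : I (Gm (a * b * c) * d)
      = I (Gm (a * b) * c * d)
        + (-1 : ℂ) ^ (pb.val * (pa.val + 1)) * I (b * Gm (a * c) * d)
        + (-1 : ℂ) ^ pa.val * I (a * Gm (b * c) * d)
        - I (Gm a * b * c * d)
        - (-1 : ℂ) ^ pa.val * I (a * Gm b * c * d)
        - (-1 : ℂ) ^ (pa.val + pb.val) * I (a * b * Gm c * d) := by
    rw [h7]
    simp only [add_mul, sub_mul, smul_mul_assoc, map_add, map_sub, map_smul, smul_eq_mul]
  linear_combination e2 - e1
end

section
/- The subspaces H₀ and H₄ are orthogonal with respect to the scalar product (a,b) = ∫ab (i.e. ∫xy = 0 for all x ∈ H₀, y ∈ H₄); consequently, if the scalar product (a,b) = ∫ab is nondegenerate on H (axiom A7), then its restriction to H₀ is nondegenerate. -/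
/-!
For `x ∈ H₀` both `Q x` and `G₊ x` vanish. Splitting `x` and `w` into homogeneous parts
(an odd operator kills a sum of homogeneous elements only if it kills each of them),
supercommutativity and axiom A6 give `∫ x (T w) = ± ∫ (T w) x = ± ∫ w (T x) = 0` for
`T = Q, G₊`. Every block of `H₄` lies in `im Q + im G₊`, since `e_α = G₊ Q e_α` and
`G₋ e_α = G₊ Q G₋ e_α`; this is the orthogonality. Nondegeneracy on `H₀` then follows
from `H = H₀ ⊕ H₄`.
-/

section Grading

variable {R M : Type*} [Ring R] [AddCommGroup M] [Module R M] {A : ZMod 2 → Submodule R M}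

theorem DirectSum.IsInternal.exists_mem_zero_add_mem_one (hA : DirectSum.IsInternal A)
    (x : M) : ∃ x₀ ∈ A 0, ∃ x₁ ∈ A 1, x₀ + x₁ = x := by
  have hsup : A 0 ⊔ A 1 = ⊤ := by
    refine top_unique (hA.submodule_iSup_eq_top ▸ iSup_le fun i => ?_)
    fin_cases i
    exacts [le_sup_left, le_sup_right]
  exact Submodule.mem_sup.mp (hsup ▸ Submodule.mem_top)

theorem DirectSum.IsInternal.odd_map_eq_zero_of_map_add_eq_zero (hA : DirectSum.IsInternal A)
    {T : M →ₗ[R] M} (hT : ∀ (p : ZMod 2) (a : M), a ∈ A p → T a ∈ A (p + 1))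
    {x₀ x₁ : M} (h₀ : x₀ ∈ A 0) (h₁ : x₁ ∈ A 1) (h : T (x₀ + x₁) = 0) :
    T x₀ = 0 ∧ T x₁ = 0 := by
  rw [map_add, add_eq_zero_iff_eq_neg] at h
  have hTx₁ : T x₁ ∈ A 0 := hT 1 x₁ h₁
  have hTx₀ : T x₀ = 0 :=
    Submodule.disjoint_def.mp (hA.submodule_iSupIndep.pairwiseDisjoint (by decide))
      _ (h ▸ (A 0).neg_mem hTx₁) (zero_add (1 : ZMod 2) ▸ hT 0 x₀ h₀)
  exact ⟨hTx₀, neg_eq_zero.mp (h ▸ hTx₀)⟩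

end Grading

section Superalgebra

variable {H : Type*} [Ring H] [Algebra ℂ H] {A : ZMod 2 → Submodule ℂ H}

theorem integral_mul_map_eq_zero_of_map_eq_zero (hA : DirectSum.IsInternal A)
    (hsupercomm : ∀ (p q : ZMod 2) (a b : H), a ∈ A p → b ∈ A q →
      a * b = ((-1 : ℂ) ^ (p.val * q.val)) • (b * a))
    {T : H →ₗ[ℂ] H} (hT : ∀ (p : ZMod 2) (a : H), a ∈ A p → T a ∈ A (p + 1))
    (I : H →ₗ[ℂ] ℂ) (sign : ZMod 2 → ℂ)
    (hIT : ∀ (p : ZMod 2) (a : H), a ∈ A p → ∀ b : H, I (T a * b) = sign p * I (a * T b))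
    {x : H} (hx : T x = 0) (w : H) : I (x * T w) = 0 := by
  have homogeneous : ∀ (p q : ZMod 2) (a u : H), a ∈ A p → T a = 0 → u ∈ A q →
      I (a * T u) = 0 := fun p q a u ha hTa hu => by
    rw [hsupercomm p (q + 1) a (T u) ha (hT q u hu), map_smul, smul_eq_mul, hIT q u hu, hTa,
      mul_zero, map_zero, mul_zero, mul_zero]
  obtain ⟨x₀, hx₀, x₁, hx₁, rfl⟩ := hA.exists_mem_zero_add_mem_one x
  obtain ⟨w₀, hw₀, w₁, hw₁, rfl⟩ := hA.exists_mem_zero_add_mem_one w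
  obtain ⟨hTx₀, hTx₁⟩ := hA.odd_map_eq_zero_of_map_add_eq_zero hT hx₀ hx₁ hx
  simp only [map_add, add_mul, mul_add, homogeneous 0 0 x₀ w₀ hx₀ hTx₀ hw₀,
    homogeneous 0 1 x₀ w₁ hx₀ hTx₀ hw₁, homogeneous 1 0 x₁ w₀ hx₁ hTx₁ hw₀,
    homogeneous 1 1 x₁ w₁ hx₁ hTx₁ hw₁, add_zero]

end Superalgebra

theorem iSup_span_le_range_sup_range {R M ι : Type*} [Semiring R] [AddCommMonoid M]
    [Module R M] {Q Gm Gp : M →ₗ[R] M} {e : ι → M}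
    (hGpQe : ∀ α : ι, Gp (Q (e α)) = e α) (hGpQGme : ∀ α : ι, Gp (Q (Gm (e α))) = Gm (e α)) :
    ⨆ α : ι, Submodule.span R {e α, Q (e α), Gm (e α), Q (Gm (e α))} ≤
      LinearMap.range Q ⊔ LinearMap.range Gp := by
  refine iSup_le fun α => Submodule.span_le.mpr ?_
  rintro z (rfl | rfl | rfl | rfl)
  · exact Submodule.mem_sup_right ⟨_, hGpQe α⟩
  · exact Submodule.mem_sup_left ⟨_, rfl⟩
  · exact Submodule.mem_sup_right ⟨_, hGpQGme α⟩
  · exact Submodule.mem_sup_left ⟨_, rfl⟩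

theorem H0_H4_orthogonal_and_nondegeneracy_restricts_general
    {H : Type*} [Ring H] [Algebra ℂ H]
    (Hhom : ZMod 2 → Submodule ℂ H)
    (hinternal : DirectSum.IsInternal Hhom)
    (hsupercomm : ∀ (p q : ZMod 2) (a b : H), a ∈ Hhom p → b ∈ Hhom q →
      a * b = ((-1 : ℂ) ^ (p.val * q.val)) • (b * a))
    (Q Gm Gp : H →ₗ[ℂ] H)
    (H0 : Submodule ℂ H) {ι : Type*} (e : ι → H)
    (hQ0 : ∀ x ∈ H0, Q x = 0)
    (hspan : H0 ⊔ (⨆ α : ι, Submodule.span ℂ {e α, Q (e α), Gm (e α), Q (Gm (e α))}) = ⊤)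
    (hGp0 : ∀ x ∈ H0, Gp x = 0)
    (hGpQe : ∀ α : ι, Gp (Q (e α)) = e α)
    (hGpQGme : ∀ α : ι, Gp (Q (Gm (e α))) = Gm (e α))
    (hQodd : ∀ (p : ZMod 2) (a : H), a ∈ Hhom p → Q a ∈ Hhom (p + 1))
    (hGpodd : ∀ (p : ZMod 2) (a : H), a ∈ Hhom p → Gp a ∈ Hhom (p + 1))
    (I : H →ₗ[ℂ] ℂ)
    (hIQ : ∀ (p : ZMod 2) (a : H), a ∈ Hhom p → ∀ b : H,
      I (Q a * b) = ((-1 : ℂ) ^ (p.val + 1)) * I (a * Q b))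
    (hIGp : ∀ (p : ZMod 2) (a : H), a ∈ Hhom p → ∀ b : H,
      I (Gp a * b) = ((-1 : ℂ) ^ p.val) * I (a * Gp b)) :
    (∀ x ∈ H0, ∀ y ∈ (⨆ α : ι, Submodule.span ℂ {e α, Q (e α), Gm (e α), Q (Gm (e α))}),
      I (x * y) = 0) ∧
    ((∀ x : H, (∀ y : H, I (x * y) = 0) → x = 0) →
      ∀ x ∈ H0, (∀ y ∈ H0, I (x * y) = 0) → x = 0) := by
  have horth : ∀ x ∈ H0, ∀ y ∈ (⨆ α : ι, Submodule.span ℂ {e α, Q (e α), Gm (e α), Q (Gm (e α))}),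
      I (x * y) = 0 := by
    intro x hx y hy
    obtain ⟨_, ⟨u, rfl⟩, _, ⟨v, rfl⟩, rfl⟩ :=
      Submodule.mem_sup.mp (iSup_span_le_range_sup_range hGpQe hGpQGme hy)
    rw [mul_add, map_add,
      integral_mul_map_eq_zero_of_map_eq_zero hinternal hsupercomm hQodd I _ hIQ (hQ0 x hx),
      integral_mul_map_eq_zero_of_map_eq_zero hinternal hsupercomm hGpodd I _ hIGp (hGp0 x hx),
      add_zero]
  refine ⟨horth, fun hnondeg x hx hxH0 => hnondeg x fun y => ?_⟩
  obtain ⟨y₀, hy₀, y₄, hy₄, rfl⟩ := Submodule.mem_sup.mp (hspan ▸ Submodule.mem_top : y ∈ _)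
  rw [mul_add, map_add, hxH0 y₀ hy₀, horth x hx y₄ hy₄, add_zero]

/-- the subspaces `H₀` and `H₄` are orthogonal with respect to the
scalar product `(x,y) = ∫xy` (i.e. `∫xy = 0` for `x ∈ H₀`, `y ∈ H₄`); consequently,
if the scalar product is nondegenerate on `H` (axiom A7), then its restriction to
`H₀` is nondegenerate.  Setting: `H` is a ℤ₂-graded supercommutative associative
unital ℂ-algebra with operators `Q, G₋, G₊` as in axioms A1, A2 and the definition
of `G₊`, and the even linear functional `I = ∫` satisfies axiom A6;
`H₄ = ⨆ α, span {e α, Q e α, G₋ e α, Q G₋ e α}`. -/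
theorem H0_H4_orthogonal_and_nondegeneracy_restricts
    {H : Type*} [Ring H] [Algebra ℂ H]
    (Hhom : ZMod 2 → Submodule ℂ H)
    (hinternal : DirectSum.IsInternal Hhom)
    (hone : (1 : H) ∈ Hhom 0)
    (hmul : ∀ (p q : ZMod 2) (a b : H), a ∈ Hhom p → b ∈ Hhom q → a * b ∈ Hhom (p + q))
    (hsupercomm : ∀ (p q : ZMod 2) (a b : H), a ∈ Hhom p → b ∈ Hhom q →
      a * b = ((-1 : ℂ) ^ (p.val * q.val)) • (b * a))
    (Q Gm Gp : H →ₗ[ℂ] H)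
    (H0 : Submodule ℂ H) {ι : Type*} (e : ι → H)
    (hQ2 : Q ∘ₗ Q = 0) (hGm2 : Gm ∘ₗ Gm = 0) (hQGm : Q ∘ₗ Gm + Gm ∘ₗ Q = 0)
    (hQ0 : ∀ x ∈ H0, Q x = 0) (hGm0 : ∀ x ∈ H0, Gm x = 0)
    (hindep : ∀ α : ι, LinearIndependent ℂ ![e α, Q (e α), Gm (e α), Q (Gm (e α))])
    (hdirect : iSupIndep (fun o : Option ι => o.elim H0 fun α =>
      Submodule.span ℂ {e α, Q (e α), Gm (e α), Q (Gm (e α))}))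
    (hspan : H0 ⊔ (⨆ α : ι, Submodule.span ℂ {e α, Q (e α), Gm (e α), Q (Gm (e α))}) = ⊤)
    (hGp0 : ∀ x ∈ H0, Gp x = 0)
    (hGpe : ∀ α : ι, Gp (e α) = 0)
    (hGpGme : ∀ α : ι, Gp (Gm (e α)) = 0)
    (hGpQe : ∀ α : ι, Gp (Q (e α)) = e α)
    (hGpQGme : ∀ α : ι, Gp (Q (Gm (e α))) = Gm (e α))
    (hQodd : ∀ (p : ZMod 2) (a : H), a ∈ Hhom p → Q a ∈ Hhom (p + 1))
    (hGmodd : ∀ (p : ZMod 2) (a : H), a ∈ Hhom p → Gm a ∈ Hhom (p + 1))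
    (hGpodd : ∀ (p : ZMod 2) (a : H), a ∈ Hhom p → Gp a ∈ Hhom (p + 1))
    (I : H →ₗ[ℂ] ℂ)
    (hIeven : ∀ a ∈ Hhom 1, I a = 0)
    (hIQ : ∀ (p : ZMod 2) (a : H), a ∈ Hhom p → ∀ b : H,
      I (Q a * b) = ((-1 : ℂ) ^ (p.val + 1)) * I (a * Q b))
    (hIGm : ∀ (p : ZMod 2) (a : H), a ∈ Hhom p → ∀ b : H,
      I (Gm a * b) = ((-1 : ℂ) ^ p.val) * I (a * Gm b))
    (hIGp : ∀ (p : ZMod 2) (a : H), a ∈ Hhom p → ∀ b : H,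
      I (Gp a * b) = ((-1 : ℂ) ^ p.val) * I (a * Gp b)) :
    (∀ x ∈ H0, ∀ y ∈ (⨆ α : ι, Submodule.span ℂ {e α, Q (e α), Gm (e α), Q (Gm (e α))}),
      I (x * y) = 0) ∧
    ((∀ x : H, (∀ y : H, I (x * y) = 0) → x = 0) →
      ∀ x ∈ H0, (∀ y ∈ H0, I (x * y) = 0) → x = 0) :=
  H0_H4_orthogonal_and_nondegeneracy_restricts_general Hhom hinternal hsupercomm Q Gm Gp H0 e hQ0
    hspan hGp0 hGpQe hGpQGme hQodd hGpodd I hIQ hIGp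
end
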